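/- Doubling formula for bivariate Fibonacci polynomials: for all natural numbers n and m, F_{2n+m}(x,s) = \sum_{k=0}^n \binom{n}{k} s^k x^{n-k} F_{n-k+m}(x,s). -/
import Mathlib


def fibP {R : Type*} [CommRing R] (x s : R) : ℕ → R
  | 0 => 0
  | 1 => 1
  | n + 2 => x * fibP x s (n + 1) + s * fibP x s n

lemma fibP_add_two {R : Type*} [CommRing R] (x s : R) (k : ℕ) :
    fibP x s (k + 2) = x * fibP x s (k + 1) + s * fibP x s k := rfl

theorem fibP_doubling {R : Type*} [CommRing R] (x s : R) (n m : ℕ) :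
    fibP x s (2 * n + m) =
      ∑ k ∈ Finset.range (n + 1),
        (n.choose k : R) * s ^ k * x ^ (n - k) * fibP x s (n - k + m) := by
  induction n generalizing m with
  | zero => simp
  | succ n ih =>
    have h2 : 2 * (n + 1) + m = 2 * n + (m + 2) := by ring
    rw [h2, ih (m + 2)]
    have hL : ∀ k ∈ Finset.range (n + 1),
        (n.choose k : R) * s ^ k * x ^ (n - k) * fibP x s (n - k + (m + 2)) =
        (n.choose k : R) * s ^ k * x ^ (n - k + 1) * fibP x s (n - k + (m + 1))
          + (n.choose k : R) * s ^ (k + 1) * x ^ (n - k) * fibP x s (n - k + m) := by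
      intro k _
      have e1 : n - k + (m + 2) = (n - k + m) + 2 := by omega
      have e2 : n - k + (m + 1) = (n - k + m) + 1 := by omega
      rw [e1, e2, fibP_add_two]
      ring
    rw [Finset.sum_congr rfl hL, Finset.sum_add_distrib]
    -- RHS
    rw [Finset.sum_range_succ' (fun k => ((n + 1).choose k : R) * s ^ k *
      x ^ (n + 1 - k) * fibP x s (n + 1 - k + m)) (n + 1)]
    have hR : ∀ k ∈ Finset.range (n + 1),
        ((n + 1).choose (k + 1) : R) * s ^ (k + 1) * x ^ (n + 1 - (k + 1)) *
            fibP x s (n + 1 - (k + 1) + m) =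
        (n.choose k : R) * s ^ (k + 1) * x ^ (n - k) * fibP x s (n - k + m)
          + (n.choose (k + 1) : R) * s ^ (k + 1) * x ^ (n - k) * fibP x s (n - k + m) := by
      intro k _
      have e1 : n + 1 - (k + 1) = n - k := by omega
      rw [e1, Nat.choose_succ_succ]
      push_cast
      ring
    rw [Finset.sum_congr rfl hR, Finset.sum_add_distrib]
    -- first sum on LHS
    rw [Finset.sum_range_succ' (fun k => (n.choose k : R) * s ^ k *
      x ^ (n - k + 1) * fibP x s (n - k + (m + 1))) n]
    have hA : ∀ k ∈ Finset.range n,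
        (n.choose (k + 1) : R) * s ^ (k + 1) * x ^ (n - (k + 1) + 1) *
            fibP x s (n - (k + 1) + (m + 1)) =
        (n.choose (k + 1) : R) * s ^ (k + 1) * x ^ (n - k) * fibP x s (n - k + m) := by
      intro k hk
      rw [Finset.mem_range] at hk
      have e1 : n - (k + 1) + 1 = n - k := by omega
      have e2 : n - (k + 1) + (m + 1) = n - k + m := by omega
      rw [e1, e2]
    rw [Finset.sum_congr rfl hA]
    -- drop last term of the C(n,k+1) sum on RHS
    rw [Finset.sum_range_succ (fun k => (n.choose (k + 1) : R) * s ^ (k + 1) *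
      x ^ (n - k) * fibP x s (n - k + m)) n]
    simp only [Nat.choose_succ_self, Nat.cast_zero, Nat.sub_zero, Nat.choose_zero_right,
      Nat.cast_one]
    have e3 : n + (m + 1) = n + 1 + m := by omega
    rw [e3]
    ring
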